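/- arXiv:1905.06611 — 2 statements merged into one kernel-verified Lean document; each statement's English description precedes it below -/
import Mathlib

section
/- Let R be a commutative ring and x ∈ R. Let M be an R-module on which x acts locally nilpotently (for every m ∈ M there exists n ∈ ℕ with xⁿ·m = 0) and let N be an R-module on which multiplication by x is bijective. Then M ⊗_R N = 0, and moreover Tor_i^R(M, N) = 0 for all i ≥ 0. -/
open CategoryTheory TensorProduct
open CategoryTheory.MonoidalCategory

section Aux

variable {R : Type} [CommRing R] (x : R)

/-- If `x` acts locally nilpotently and injectively on `T`, then `T` is trivial. -/
lemma aux_subsingleton {T : Type*} [AddCommGroup T] [Module R T]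
    (h1 : ∀ t : T, ∃ n : ℕ, x ^ n • t = 0)
    (h2 : Function.Injective (fun t : T => x • t)) : Subsingleton T := by
  have key : ∀ n : ℕ, ∀ t : T, x ^ n • t = 0 → t = 0 := by
    intro n
    induction n with
    | zero => intro t ht; simpa using ht
    | succ n ih =>
      intro t ht
      have h' : x ^ n • (x • t) = 0 := by
        rw [smul_smul, ← pow_succ]; exact ht
      have h0 : x • t = 0 := ih _ h'
      have : (fun t : T => x • t) t = (fun t : T => x • t) 0 := by simpa using h0
      exact h2 this
  refine subsingleton_of_forall_eq 0 fun t => ?_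
  obtain ⟨n, hn⟩ := h1 t
  exact key n t hn

/-- Local nilpotence passes to tensor products in the left factor. -/
lemma aux_tensor {M : Type*} [AddCommGroup M] [Module R M]
    {P : Type*} [AddCommGroup P] [Module R P]
    (hM : ∀ m : M, ∃ n : ℕ, x ^ n • m = 0) (t : M ⊗[R] P) :
    ∃ n : ℕ, x ^ n • t = 0 := by
  induction t with
  | zero => exact ⟨0, by simp⟩
  | tmul m p =>
    obtain ⟨n, hn⟩ := hM m
    exact ⟨n, by rw [smul_tmul', hn, zero_tmul]⟩
  | add a b ha hb =>
    obtain ⟨n, hn⟩ := ha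
    obtain ⟨k, hk⟩ := hb
    refine ⟨n + k, ?_⟩
    have h1 : x ^ (n + k) • a = x ^ k • x ^ n • a := by
      rw [← mul_smul, ← pow_add, add_comm]
    have h2 : x ^ (n + k) • b = x ^ n • x ^ k • b := by
      rw [← mul_smul, ← pow_add]
    rw [smul_add, h1, h2, hn, hk, smul_zero, smul_zero, add_zero]

/-- If `x` acts bijectively on `N`, it acts injectively on `M ⊗ N`. -/
lemma aux_tensor_inj {M N : Type*} [AddCommGroup M] [Module R M]
    [AddCommGroup N] [Module R N]
    (hN : Function.Bijective (fun n : N => x • n)) :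
    Function.Injective (fun t : M ⊗[R] N => x • t) := by
  have hcoe : ⇑(x • (LinearMap.id : N →ₗ[R] N)) = fun n : N => x • n := by
    ext n; simp
  have hbij : Function.Bijective ⇑(x • (LinearMap.id : N →ₗ[R] N)) := by
    rw [hcoe]; exact hN
  set e : N ≃ₗ[R] N := LinearEquiv.ofBijective _ hbij with he
  have hE : ∀ t : M ⊗[R] N, (LinearEquiv.lTensor M e) t = x • t := by
    intro t
    induction t with
    | zero => simp
    | tmul m n =>
      have : e n = x • n := by simp [he, LinearEquiv.ofBijective]
      rw [LinearEquiv.lTensor_tmul, this, tmul_smul]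
    | add a b ha hb => rw [map_add, ha, hb, smul_add]
  intro a b hab
  exact (LinearEquiv.lTensor M e).injective (by rw [hE a, hE b]; exact hab)

end Aux

/-- Let `R` be a commutative ring and `x ∈ R`. If `x` acts locally nilpotently on the
`R`-module `M` and bijectively on the `R`-module `N`, then `M ⊗[R] N = 0` and moreover
`Tor_i^R(M, N) = 0` for all `i ≥ 0`. -/
theorem stmt_7 (R : Type) [CommRing R] (x : R)
    (M N : Type) [AddCommGroup M] [Module R M] [AddCommGroup N] [Module R N]
    (hM : ∀ m : M, ∃ n : ℕ, x ^ n • m = 0)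
    (hN : Function.Bijective (fun n : N => x • n)) :
    Subsingleton (M ⊗[R] N) ∧
      ∀ i : ℕ, Subsingleton (((Tor (ModuleCat R) i).obj (ModuleCat.of R M)).obj
        (ModuleCat.of R N)) := by
  constructor
  · exact aux_subsingleton x (aux_tensor x hM) (aux_tensor_inj x hN)
  · intro i
    set Mc : ModuleCat R := ModuleCat.of R M with hMc
    set Nc : ModuleCat R := ModuleCat.of R N with hNc
    obtain ⟨P⟩ := (inferInstance : HasProjectiveResolution Nc).out
    set F : ModuleCat R ⥤ ModuleCat R := (tensoringLeft (ModuleCat R)).obj Mc with hF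
    set K := (F.mapHomologicalComplex (ComplexShape.down ℕ)).obj P.complex with hK
    set e : (F.leftDerived i).obj Nc ≅ K.homology i := P.isoLeftDerivedObj F i with hee
    -- The Tor group is `(F.leftDerived i).obj Nc`
    -- local nilpotence
    have hsurj1 : Function.Surjective e.inv :=
      (ModuleCat.epi_iff_surjective _).1 inferInstance
    have hsurj2 : Function.Surjective (K.homologyπ i) :=
      (ModuleCat.epi_iff_surjective _).1 inferInstance
    have hinj : Function.Injective (K.iCycles i) :=
      (ModuleCat.mono_iff_injective _).1 inferInstance
    have h1 : ∀ t : ((Tor (ModuleCat R) i).obj Mc).obj Nc, ∃ n : ℕ, x ^ n • t = 0 := by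
      intro t
      obtain ⟨h, rfl⟩ := hsurj1 t
      obtain ⟨c, rfl⟩ := hsurj2 h
      obtain ⟨n, hn⟩ : ∃ n : ℕ, x ^ n • (K.iCycles i c) = 0 :=
        aux_tensor x hM (K.iCycles i c)
      refine ⟨n, ?_⟩
      have hc : x ^ n • c = 0 := hinj (by rw [map_smul, hn, map_zero])
      have h2 : e.inv ((K.homologyπ i) (x ^ n • c)) = x ^ n • e.inv ((K.homologyπ i) c) := by
        rw [map_smul, map_smul]
      have h3 : e.inv ((K.homologyπ i) (x ^ n • c)) = 0 := by rw [hc, map_zero, map_zero]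
      exact h2.symm.trans h3
    -- injectivity of multiplication by x, via functoriality in N
    have hcoe : ⇑(x • (LinearMap.id : N →ₗ[R] N)) = fun n : N => x • n := by
      ext n; simp
    have hbij : Function.Bijective ⇑(x • (LinearMap.id : N →ₗ[R] N)) := by
      rw [hcoe]; exact hN
    set g : Nc ⟶ Nc := x • 𝟙 Nc with hg
    have hgiso : IsIso g := by
      have : g = (LinearEquiv.ofBijective _ hbij).toModuleIso.hom := by
        rfl
      rw [this]
      infer_instance
    set Θ := (F.leftDerived i).map g with hΘ
    have hΘiso : IsIso Θ := by
      rw [hΘ]; infer_instance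
    -- the chain map lifting g
    set φ : P.complex ⟶ P.complex := x • 𝟙 P.complex with hφ
    have comm : φ.f 0 ≫ P.π.f 0 = P.π.f 0 ≫ g := by
      rw [hφ, hg]
      ext y
      exact map_smul (P.π.f 0).hom x y
    have hnat := ProjectiveResolution.isoLeftDerivedObj_hom_naturality g P P φ comm F i
    rw [← hee] at hnat
    have hmapφ : (F.mapHomologicalComplex (ComplexShape.down ℕ)).map φ = x • 𝟙 K := by
      rw [hφ, Functor.map_smul, CategoryTheory.Functor.map_id]
    have hhomsmul :
        (HomologicalComplex.homologyFunctor (ModuleCat R) (ComplexShape.down ℕ) i).map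
          ((x : R) • (𝟙 K)) = x • 𝟙 (K.homology i) := by
      show HomologicalComplex.homologyMap ((x : R) • (𝟙 K)) i = _
      have : (HomologicalComplex.shortComplexFunctor (ModuleCat R)
            (ComplexShape.down ℕ) i).map ((x : R) • (𝟙 K)) =
          x • (HomologicalComplex.shortComplexFunctor (ModuleCat R)
            (ComplexShape.down ℕ) i).map (𝟙 K) := by
        apply ShortComplex.Hom.ext <;> rfl
      rw [HomologicalComplex.homologyMap, this, ShortComplex.homologyMap_smul,
        ← HomologicalComplex.homologyMap, HomologicalComplex.homologyMap_id]
      rfl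
    have hΘeq : Θ = x • 𝟙 ((F.leftDerived i).obj Nc) := by
      have : Θ ≫ e.hom = e.hom ≫ (x • 𝟙 (K.homology i)) := by
        rw [hΘ]
        exact hnat.trans (by rw [Functor.comp_map, hmapφ, hhomsmul]; rfl)
      have h2 : Θ = e.hom ≫ (x • 𝟙 (K.homology i)) ≫ e.inv := by
        erw [← Category.assoc, ← this, Category.assoc, Iso.hom_inv_id, Category.comp_id]
      rw [h2]
      erw [Linear.smul_comp, Category.id_comp, Linear.comp_smul, Iso.hom_inv_id]
    have h2 : Function.Injective
        (fun t : ((Tor (ModuleCat R) i).obj Mc).obj Nc => x • t) := by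
      have hbijΘ : Function.Bijective Θ := ConcreteCategory.bijective_of_isIso Θ
      intro a b hab
      apply hbijΘ.1
      show Θ a = Θ b
      rw [hΘeq]
      show (x • 𝟙 ((F.leftDerived i).obj Nc)) a = (x • 𝟙 ((F.leftDerived i).obj Nc)) b
      exact hab
    exact aux_subsingleton x h1 h2
end

section
/- Let A be a commutative ring and let B be an étale A-algebra (in particular, B is separable over A). Then B, viewed as a module over the enveloping algebra B ⊗_A B via the multiplication map B ⊗_A B → B, is a projective B ⊗_A B-module. -/
open TensorProduct

/-- If `B` is an étale `A`-algebra, then `B`, viewed as a module over the enveloping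
algebra `B ⊗[A] B` via the multiplication map `B ⊗[A] B → B`, is projective. -/
theorem stmt_13 (A B : Type) [CommRing A] [CommRing B] [Algebra A B]
    [Algebra.Etale A B] :
    letI : Algebra (B ⊗[A] B) B :=
      (Algebra.TensorProduct.lmul' A (S := B)).toRingHom.toAlgebra
    Module.Projective (B ⊗[A] B) B := by
  letI : Algebra (B ⊗[A] B) B :=
    (Algebra.TensorProduct.lmul' A (S := B)).toRingHom.toAlgebra
  haveI : IsScalarTower B (B ⊗[A] B) B := IsScalarTower.of_algebraMap_eq fun b => by
    change b = Algebra.TensorProduct.lmul' A (b ⊗ₜ[A] 1)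
    simp
  haveI : Algebra.FormallyUnramified B (B ⊗[A] B) :=
    Algebra.FormallyUnramified.base_change (R := A) (A := B) B
  haveI : Algebra.EssFiniteType B (B ⊗[A] B) := by
    haveI : Algebra.FiniteType A B := inferInstance
    haveI : Algebra.FiniteType B (B ⊗[A] B) := inferInstance
    infer_instance
  exact Algebra.FormallyUnramified.projective_of_restrictScalars B (B ⊗[A] B) B
end
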